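/- Let (V, σ) be a pre-braided vector space with a braided character ε. Define face maps d_{n;i} : V^⊗n → V^⊗(n−1) by d_{n;i} = ε₁ ∘ (σ₁ ∘ σ₂ ∘ ⋯ ∘ σ_{i−1}) (moving the i-th strand leftmost and then applying ε to the first factor). Then these maps satisfy the presimplicial identities d_{n−1;i} ∘ d_{n;j} = d_{n−1;j−1} ∘ d_{n;i} for all 1 ≤ i < j ≤ n. -/

import Mathlib

open TensorProduct

universe u
variable {R V : Type u} [CommRing R] [AddCommGroup V] [Module R V]

/-- `σ ⊗ id` as an endomorphism of `V ⊗ (V ⊗ V)`. -/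
noncomputable def sigma1 (σ : V ⊗[R] V →ₗ[R] V ⊗[R] V) :
    V ⊗[R] (V ⊗[R] V) →ₗ[R] V ⊗[R] (V ⊗[R] V) :=
  (TensorProduct.assoc R V V V).toLinearMap ∘ₗ (LinearMap.rTensor V σ) ∘ₗ
    (TensorProduct.assoc R V V V).symm.toLinearMap

/-- `id ⊗ σ` as an endomorphism of `V ⊗ (V ⊗ V)`. -/
noncomputable def sigma2 (σ : V ⊗[R] V →ₗ[R] V ⊗[R] V) :
    V ⊗[R] (V ⊗[R] V) →ₗ[R] V ⊗[R] (V ⊗[R] V) :=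
  LinearMap.lTensor V σ

/-- The Yang–Baxter equation for `σ : V ⊗ V → V ⊗ V`. -/
def YangBaxter (σ : V ⊗[R] V →ₗ[R] V ⊗[R] V) : Prop :=
  sigma1 σ ∘ₗ sigma2 σ ∘ₗ sigma1 σ = sigma2 σ ∘ₗ sigma1 σ ∘ₗ sigma2 σ

variable (R V) in
/-- The iterated tensor power `V^{⊗n}` (left-nested: `TP 0 = R`, `TP (n+1) = V ⊗ TP n`),
bundled as an object of `ModuleCat R` so that the recursion carries its instances. -/
noncomputable def TPb : ℕ → ModuleCat.{u} R
  | 0 => ModuleCat.of R R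
  | n + 1 => ModuleCat.of R (V ⊗[R] (TPb n))

variable (R V) in
/-- The iterated tensor power `V^{⊗n}` as a type. -/
noncomputable abbrev TP (n : ℕ) : Type u := (TPb R V n : Type u)

/-- The lift `σᵢ = id^{⊗(i−1)} ⊗ σ ⊗ id^{⊗(n−i−1)}` of `σ` to `V^{⊗n}`, acting on the
tensor factors `i` and `i+1` (1-indexed); it is the identity for out-of-range `i`. -/
noncomputable def sig (σ : V ⊗[R] V →ₗ[R] V ⊗[R] V) :
    (n : ℕ) → (i : ℕ) → TP R V n →ₗ[R] TP R V n
  | 0, _ => LinearMap.id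
  | 1, _ => LinearMap.id
  | n+2, 0 => LinearMap.id
  | n+2, 1 =>
      (TensorProduct.assoc R V V (TP R V n)).toLinearMap ∘ₗ
        (LinearMap.rTensor (TP R V n) σ) ∘ₗ
        (TensorProduct.assoc R V V (TP R V n)).symm.toLinearMap
  | n+2, i+2 => LinearMap.lTensor V (sig σ (n+1) (i+1))

/-- The braid lift `T^σ_{p_{i,n}} = σ₁ ∘ σ₂ ∘ ⋯ ∘ σ_{i−1}` of the permutation `p_{i,n}`
moving the `i`-th strand to the leftmost position. -/
noncomputable def slide (σ : V ⊗[R] V →ₗ[R] V ⊗[R] V) (n : ℕ) :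
    (i : ℕ) → TP R V n →ₗ[R] TP R V n
  | 0 => LinearMap.id
  | 1 => LinearMap.id
  | i+2 => slide σ n (i+1) ∘ₗ sig σ n (i+1)

/-- `ε₁ = ε ⊗ id^{⊗n}` : applying `ε` to the first tensor factor of `V^{⊗(n+1)}`. -/
noncomputable def eps1 (ε : V →ₗ[R] R) (n : ℕ) : TP R V (n+1) →ₗ[R] TP R V n :=
  (TensorProduct.lid R (TP R V n)).toLinearMap ∘ₗ LinearMap.rTensor (TP R V n) ε

/-- The face map `d_{n+1;i} = ε₁ ∘ T^σ_{p_{i,n+1}} : V^{⊗(n+1)} → V^{⊗n}`. -/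
noncomputable def face (σ : V ⊗[R] V →ₗ[R] V ⊗[R] V) (ε : V →ₗ[R] R) (n : ℕ) (i : ℕ) :
    TP R V (n+1) →ₗ[R] TP R V n :=
  eps1 ε n ∘ₗ slide σ (n+1) i

/-- The braided differential `d_{n+1} = Σ_{i=1}^{n+1} (−1)^{i−1} ε₁ ∘ T^σ_{p_{i,n+1}}`. -/
noncomputable def dbr (σ : V ⊗[R] V →ₗ[R] V ⊗[R] V) (ε : V →ₗ[R] R) (n : ℕ) :
    TP R V (n+1) →ₗ[R] TP R V n :=
  ∑ i ∈ Finset.range (n+1), ((-1 : R)^i) • face σ ε n (i+1)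

/-!
Write `dᵢ = ε₁ ∘ σ₁ ⋯ σᵢ₋₁`. Since `dᵢ₊₁ = dᵢ ∘ σᵢ`, and `dᵢ ∘ σₖ₊₁ = σₖ ∘ dᵢ` for `i ≤ k`
(distant braid generators commute and `ε₁` is natural), the identity for `(i, j + 1)` follows
from the one for `(i, j)`. The case `j = i + 1` amounts to `dᵢ dᵢ σᵢ = dᵢ dᵢ`. Here
`dᵢ dᵢ = ε₁ ε₁ ∘ B` with `B = (id ⊗ σ₁ ⋯ σᵢ₋₁) ∘ σ₁ ⋯ σᵢ₋₁` bringing strands `i, i + 1` to the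
front; the braid relations give `B σᵢ = σ₁ B`, and `ε₁ ε₁ σ₁ = ε₁ ε₁` because `ε` is a
braided character.
-/

def IsBraidedCharacter (σ : V ⊗[R] V →ₗ[R] V ⊗[R] V) (ε : V →ₗ[R] R) : Prop :=
  ((TensorProduct.lid R R).toLinearMap ∘ₗ TensorProduct.map ε ε) ∘ₗ σ =
    (TensorProduct.lid R R).toLinearMap ∘ₗ TensorProduct.map ε ε

section HeadMaps

variable (σ : V ⊗[R] V →ₗ[R] V ⊗[R] V) (ε : V →ₗ[R] R)
variable {W W' : Type*} [AddCommGroup W] [Module R W] [AddCommGroup W'] [Module R W']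

variable (W) in
noncomputable def braidHead : V ⊗[R] (V ⊗[R] W) →ₗ[R] V ⊗[R] (V ⊗[R] W) :=
  (TensorProduct.assoc R V V W).toLinearMap ∘ₗ LinearMap.rTensor W σ ∘ₗ
    (TensorProduct.assoc R V V W).symm.toLinearMap

variable (W) in
noncomputable def counitHead : V ⊗[R] W →ₗ[R] W :=
  (TensorProduct.lid R W).toLinearMap ∘ₗ LinearMap.rTensor W ε

theorem counitHead_comp_lTensor (f : W →ₗ[R] W') :
    counitHead ε W' ∘ₗ LinearMap.lTensor V f = f ∘ₗ counitHead ε W := by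
  ext v w
  simp [counitHead]

theorem braidHead_comp_lTensor_lTensor (f : W →ₗ[R] W') :
    braidHead σ W' ∘ₗ LinearMap.lTensor V (LinearMap.lTensor V f) =
      LinearMap.lTensor V (LinearMap.lTensor V f) ∘ₗ braidHead σ W := by
  ext v w x
  simp only [braidHead, AlgebraTensorModule.curry_apply, curry_apply,
    LinearMap.coe_restrictScalars, LinearMap.coe_comp, LinearEquiv.coe_coe, Function.comp_apply,
    LinearMap.lTensor_tmul, assoc_symm_tmul, LinearMap.rTensor_tmul]
  induction σ (v ⊗ₜ[R] w) using TensorProduct.induction_on with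
  | zero => simp
  | tmul a b => simp
  | add p q hp hq => simp only [add_tmul, map_add, hp, hq]

variable (R V W) in
noncomputable def tripleAssoc : (V ⊗[R] (V ⊗[R] V)) ⊗[R] W ≃ₗ[R] V ⊗[R] (V ⊗[R] (V ⊗[R] W)) :=
  TensorProduct.assoc R V (V ⊗[R] V) W ≪≫ₗ
    LinearEquiv.lTensor V (TensorProduct.assoc R V V W)

theorem braidHead_eq_conj_sigma1 :
    braidHead σ (V ⊗[R] W) = (tripleAssoc R V W).conj (LinearMap.rTensor W (sigma1 σ)) := by
  ext v w u x
  simp only [braidHead, tripleAssoc, sigma1, LinearEquiv.conj_apply, LinearMap.coe_comp,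
    LinearEquiv.coe_coe, Function.comp_apply, AlgebraTensorModule.curry_apply, curry_apply,
    LinearMap.coe_restrictScalars, LinearEquiv.trans_symm, LinearEquiv.trans_apply,
    LinearEquiv.symm_lTensor, LinearEquiv.lTensor_tmul, assoc_symm_tmul, LinearMap.rTensor_tmul]
  induction σ (v ⊗ₜ[R] w) using TensorProduct.induction_on with
  | zero => simp
  | tmul a b => simp
  | add p q hp hq => simp only [add_tmul, map_add, hp, hq]

theorem lTensor_braidHead_eq_conj_sigma2 :
    LinearMap.lTensor V (braidHead σ W) =
      (tripleAssoc R V W).conj (LinearMap.rTensor W (sigma2 σ)) := by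
  ext v w u x
  simp [braidHead, tripleAssoc, sigma2, LinearEquiv.conj_apply]

theorem braidHead_yangBaxter (hσ : YangBaxter σ) :
    braidHead σ (V ⊗[R] W) ∘ₗ LinearMap.lTensor V (braidHead σ W) ∘ₗ braidHead σ (V ⊗[R] W) =
      LinearMap.lTensor V (braidHead σ W) ∘ₗ braidHead σ (V ⊗[R] W) ∘ₗ
        LinearMap.lTensor V (braidHead σ W) := by
  simp only [braidHead_eq_conj_sigma1, lTensor_braidHead_eq_conj_sigma2,
    ← LinearEquiv.conj_comp, ← LinearMap.rTensor_comp]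
  exact congrArg (fun f => (tripleAssoc R V W).conj (LinearMap.rTensor W f)) hσ

theorem counitHead_counitHead_assoc_tmul (p : V ⊗[R] V) (x : W) :
    counitHead ε W (counitHead ε (V ⊗[R] W) (TensorProduct.assoc R V V W (p ⊗ₜ[R] x))) =
      TensorProduct.lid R R (TensorProduct.map ε ε p) • x := by
  induction p using TensorProduct.induction_on with
  | zero => simp
  | tmul a b => simp [counitHead, mul_smul]
  | add p q hp hq => simp only [add_tmul, map_add, hp, hq, add_smul]

theorem counitHead_comp_counitHead_comp_braidHead (hε : IsBraidedCharacter σ ε) :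
    counitHead ε W ∘ₗ counitHead ε (V ⊗[R] W) ∘ₗ braidHead σ W =
      counitHead ε W ∘ₗ counitHead ε (V ⊗[R] W) := by
  ext v w x
  have hεvw := LinearMap.congr_fun hε (v ⊗ₜ[R] w)
  simp only [LinearMap.coe_comp, LinearEquiv.coe_coe, Function.comp_apply] at hεvw
  simp only [braidHead, AlgebraTensorModule.curry_apply, curry_apply,
    LinearMap.coe_restrictScalars, LinearMap.coe_comp, LinearEquiv.coe_coe, Function.comp_apply,
    assoc_symm_tmul, LinearMap.rTensor_tmul]
  rw [counitHead_counitHead_assoc_tmul, hεvw, ← counitHead_counitHead_assoc_tmul,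
    assoc_tmul]

end HeadMaps

section TensorPower

variable (σ : V ⊗[R] V →ₗ[R] V ⊗[R] V) (ε : V →ₗ[R] R)

/-- `id_V ⊗ f`, typed as an endomorphism of `TP R V (n+1)` rather than of `V ⊗ TP R V n`. -/
noncomputable def lTensorTP {n : ℕ} (f : TP R V n →ₗ[R] TP R V n) :
    TP R V (n+1) →ₗ[R] TP R V (n+1) :=
  LinearMap.lTensor V f

theorem lTensorTP_id (n : ℕ) : lTensorTP (LinearMap.id : TP R V n →ₗ[R] TP R V n) =
    LinearMap.id :=
  LinearMap.lTensor_id V _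

theorem lTensorTP_comp {n : ℕ} (f g : TP R V n →ₗ[R] TP R V n) :
    lTensorTP (f ∘ₗ g) = lTensorTP f ∘ₗ lTensorTP g :=
  LinearMap.lTensor_comp V f g

theorem sig_zero (n : ℕ) : sig σ n 0 = LinearMap.id := by
  rcases n with _ | _ | n <;> rfl

theorem sig_add_two (n i : ℕ) : sig σ (n+2) (i+2) = lTensorTP (sig σ (n+1) (i+1)) := rfl

theorem sig_eq_id_of_le : ∀ {n i : ℕ}, n ≤ i → sig σ n i = LinearMap.id
  | 0, _, _ | 1, _, _ => rfl
  | n + 2, i + 2, h => by rw [sig_add_two, sig_eq_id_of_le (by omega), lTensorTP_id]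

theorem sig_braid (hσ : YangBaxter σ) : ∀ (n i : ℕ), 1 ≤ i → i + 2 ≤ n →
    sig σ n i ∘ₗ sig σ n (i+1) ∘ₗ sig σ n i = sig σ n (i+1) ∘ₗ sig σ n i ∘ₗ sig σ n (i+1)
  | 2, _, _, h => by omega
  | n + 3, 1, _, _ => braidHead_yangBaxter σ hσ
  | n + 3, i + 2, _, _ => by
      rw [sig_add_two, sig_add_two, ← lTensorTP_comp, ← lTensorTP_comp, ← lTensorTP_comp,
        ← lTensorTP_comp, sig_braid hσ (n+2) (i+1) (by omega) (by omega)]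

theorem sig_comm : ∀ (n i k : ℕ), i + 2 ≤ k →
    sig σ n i ∘ₗ sig σ n k = sig σ n k ∘ₗ sig σ n i
  | n, 0, k, _ => by rw [sig_zero]; rfl
  | 0, _, _, _ | 1, _, _, _ => rfl
  | n + 2, 1, k, h => by
      obtain ⟨k, rfl⟩ : ∃ k', k = k' + 3 := ⟨k - 3, by omega⟩
      rcases n with _ | n
      · rw [sig_eq_id_of_le σ (show 2 ≤ k + 3 by omega)]; rfl
      · exact braidHead_comp_lTensor_lTensor σ (sig σ (n+1) (k+1))
  | n + 2, i + 2, k, h => by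
      obtain ⟨k, rfl⟩ : ∃ k', k = k' + 2 := ⟨k - 2, by omega⟩
      rw [sig_add_two, sig_add_two, ← lTensorTP_comp, ← lTensorTP_comp,
        sig_comm (n+1) (i+1) (k+1) (by omega)]

theorem slide_comp_sig (n : ℕ) : ∀ (i k : ℕ), i + 1 ≤ k →
    slide σ n i ∘ₗ sig σ n k = sig σ n k ∘ₗ slide σ n i
  | 0, _, _ | 1, _, _ => rfl
  | i + 2, k, _ => by
      show (slide σ n (i+1) ∘ₗ sig σ n (i+1)) ∘ₗ sig σ n k =
        sig σ n k ∘ₗ slide σ n (i+1) ∘ₗ sig σ n (i+1)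
      rw [LinearMap.comp_assoc, sig_comm σ n (i+1) k (by omega), ← LinearMap.comp_assoc,
        slide_comp_sig n (i+1) k (by omega), LinearMap.comp_assoc]

theorem eps1_comp_lTensorTP {n : ℕ} (f : TP R V n →ₗ[R] TP R V n) :
    eps1 ε n ∘ₗ lTensorTP f = f ∘ₗ eps1 ε n :=
  counitHead_comp_lTensor ε f

theorem face_comp_sig (n i k : ℕ) (h : i ≤ k + 1) :
    face σ ε (n+1) i ∘ₗ sig σ (n+2) (k+2) = sig σ (n+1) (k+1) ∘ₗ face σ ε (n+1) i := by
  rw [face, LinearMap.comp_assoc, slide_comp_sig σ (n+2) i (k+2) (by omega),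
    ← LinearMap.comp_assoc, sig_add_two, eps1_comp_lTensorTP, LinearMap.comp_assoc]

theorem lTensorTP_slide_comp_slide_comp_sig (hσ : YangBaxter σ) :
    ∀ (m i : ℕ), 1 ≤ i → i ≤ m + 1 →
      lTensorTP (slide σ (m+1) i) ∘ₗ slide σ (m+2) i ∘ₗ sig σ (m+2) i =
        sig σ (m+2) 1 ∘ₗ lTensorTP (slide σ (m+1) i) ∘ₗ slide σ (m+2) i
  | m, 1, _, _ => by
      rw [show slide σ (m+1) 1 = LinearMap.id from rfl, lTensorTP_id]
      rfl
  | m, i + 2, _, _ => by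
      have hL : lTensorTP (slide σ (m+1) (i+2)) =
          lTensorTP (slide σ (m+1) (i+1)) ∘ₗ sig σ (m+2) (i+2) :=
        lTensorTP_comp ..
      calc lTensorTP (slide σ (m+1) (i+2)) ∘ₗ slide σ (m+2) (i+2) ∘ₗ sig σ (m+2) (i+2)
          = lTensorTP (slide σ (m+1) (i+1)) ∘ₗ (sig σ (m+2) (i+2) ∘ₗ slide σ (m+2) (i+1)) ∘ₗ
              sig σ (m+2) (i+1) ∘ₗ sig σ (m+2) (i+2) := by
            rw [hL]; rfl
        _ = lTensorTP (slide σ (m+1) (i+1)) ∘ₗ slide σ (m+2) (i+1) ∘ₗ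
              sig σ (m+2) (i+2) ∘ₗ sig σ (m+2) (i+1) ∘ₗ sig σ (m+2) (i+2) := by
            rw [← slide_comp_sig σ _ _ _ (by omega)]; rfl
        _ = (lTensorTP (slide σ (m+1) (i+1)) ∘ₗ slide σ (m+2) (i+1) ∘ₗ sig σ (m+2) (i+1)) ∘ₗ
              sig σ (m+2) (i+2) ∘ₗ sig σ (m+2) (i+1) := by
            rw [← sig_braid σ hσ _ _ (by omega) (by omega)]; rfl
        _ = sig σ (m+2) 1 ∘ₗ lTensorTP (slide σ (m+1) (i+1)) ∘ₗ
              (slide σ (m+2) (i+1) ∘ₗ sig σ (m+2) (i+2)) ∘ₗ sig σ (m+2) (i+1) := by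
            rw [lTensorTP_slide_comp_slide_comp_sig hσ m (i+1) (by omega) (by omega)]; rfl
        _ = sig σ (m+2) 1 ∘ₗ lTensorTP (slide σ (m+1) (i+2)) ∘ₗ slide σ (m+2) (i+2) := by
            rw [slide_comp_sig σ _ _ _ (by omega), hL]; rfl

theorem face_comp_face_comp_sig (hσ : YangBaxter σ) (hε : IsBraidedCharacter σ ε)
    (m i : ℕ) (hi : 1 ≤ i) (him : i ≤ m + 1) :
    face σ ε m i ∘ₗ face σ ε (m+1) i ∘ₗ sig σ (m+2) i = face σ ε m i ∘ₗ face σ ε (m+1) i := by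
  have hface : face σ ε m i ∘ₗ face σ ε (m+1) i =
      eps1 ε m ∘ₗ eps1 ε (m+1) ∘ₗ lTensorTP (slide σ (m+1) i) ∘ₗ slide σ (m+2) i := by
    rw [face, face, LinearMap.comp_assoc,
      ← LinearMap.comp_assoc _ (eps1 ε (m+1)) (slide σ (m+1) i), ← eps1_comp_lTensorTP]
    rfl
  have hcounit : eps1 ε m ∘ₗ eps1 ε (m+1) ∘ₗ sig σ (m+2) 1 = eps1 ε m ∘ₗ eps1 ε (m+1) :=
    counitHead_comp_counitHead_comp_braidHead σ ε hε
  calc face σ ε m i ∘ₗ face σ ε (m+1) i ∘ₗ sig σ (m+2) i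
      = eps1 ε m ∘ₗ eps1 ε (m+1) ∘ₗ
          lTensorTP (slide σ (m+1) i) ∘ₗ slide σ (m+2) i ∘ₗ sig σ (m+2) i := by
        rw [← LinearMap.comp_assoc, hface]; rfl
    _ = (eps1 ε m ∘ₗ eps1 ε (m+1) ∘ₗ sig σ (m+2) 1) ∘ₗ
          lTensorTP (slide σ (m+1) i) ∘ₗ slide σ (m+2) i := by
        rw [lTensorTP_slide_comp_slide_comp_sig σ hσ m i hi him]; rfl
    _ = face σ ε m i ∘ₗ face σ ε (m+1) i := by
        rw [hcounit, hface]; rfl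

end TensorPower

/-- for a pre-braided vector space `(V, σ)` with a braided character `ε`,
the face maps `d_{n;i} = ε₁ ∘ (σ₁ ∘ ⋯ ∘ σ_{i−1})` satisfy the presimplicial identities
`d_{n−1;i} ∘ d_{n;j} = d_{n−1;j−1} ∘ d_{n;i}` for all `1 ≤ i < j ≤ n`. -/
theorem braided_face_maps_presimplicial
    (σ : V ⊗[R] V →ₗ[R] V ⊗[R] V) (hσ : YangBaxter σ)
    (ε : V →ₗ[R] R)
    (hε : ((TensorProduct.lid R R).toLinearMap ∘ₗ TensorProduct.map ε ε) ∘ₗ σ =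
          (TensorProduct.lid R R).toLinearMap ∘ₗ TensorProduct.map ε ε) :
    ∀ (m i j : ℕ), 1 ≤ i → i < j → j ≤ m + 2 →
      face σ ε m i ∘ₗ face σ ε (m+1) j = face σ ε m (j-1) ∘ₗ face σ ε (m+1) i := by
  intro m i j hi hij hjm
  induction j, hij using Nat.le_induction with
  | base =>
    obtain ⟨i, rfl⟩ : ∃ i', i = i' + 1 := ⟨i - 1, by omega⟩
    exact face_comp_face_comp_sig σ ε hσ hε m (i+1) hi (by omega)
  | succ j hij ih =>
    obtain ⟨k, rfl⟩ : ∃ k, j = k + 2 := ⟨j - 2, by omega⟩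
    obtain ⟨m, rfl⟩ : ∃ m', m = m' + 1 := ⟨m - 1, by omega⟩
    calc face σ ε (m+1) i ∘ₗ face σ ε (m+2) (k+3)
        = (face σ ε (m+1) i ∘ₗ face σ ε (m+2) (k+2)) ∘ₗ sig σ (m+3) (k+2) := rfl
      _ = face σ ε (m+1) (k+1) ∘ₗ face σ ε (m+2) i ∘ₗ sig σ (m+3) (k+2) := by
          rw [ih (by omega)]; rfl
      _ = (face σ ε (m+1) (k+1) ∘ₗ sig σ (m+2) (k+1)) ∘ₗ face σ ε (m+2) i := by
          rw [face_comp_sig σ ε (m+1) i k (by omega)]; rfl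
      _ = face σ ε (m+1) (k+3-1) ∘ₗ face σ ε (m+2) i := rfl
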